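/- arXiv:1802.08471 — 2 statements merged into one kernel-verified Lean document; each statement's English description precedes it below -/
import Mathlib

section
/- Let P = VVᵀ with VᵀV = I_k, and let S ⊆ [N] with P_S invertible. For i ∈ [N] define the conditional 'residual' quantity p_S(i) := P_{ii} − P_{S,i}ᵀ P_S^{−1} P_{S,i} (which is 0 for i ∈ S). Then ∑_{i=1}^N p_S(i) = k − |S|. -/
open Matrix BigOperators

/-- Principal submatrix of `P` indexed by the subset `S`. -/
def principalSub {N : ℕ} (P : Matrix (Fin N) (Fin N) ℝ) (S : Finset (Fin N)) :
    Matrix {i // i ∈ S} {i // i ∈ S} ℝ :=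
  Matrix.of fun i j => P i.1 j.1

/-- The column vector `(P_{s,i})_{s ∈ S}`. -/
def colSub {N : ℕ} (P : Matrix (Fin N) (Fin N) ℝ) (S : Finset (Fin N)) (i : Fin N) :
    {s // s ∈ S} → ℝ :=
  fun s => P s.1 i

/-- The quadratic form `P_{S,i}ᵀ P_S⁻¹ P_{S,j}`. -/
noncomputable def quadForm {N : ℕ} (P : Matrix (Fin N) (Fin N) ℝ) (S : Finset (Fin N))
    (i j : Fin N) : ℝ :=
  colSub P S i ⬝ᵥ ((principalSub P S)⁻¹ *ᵥ colSub P S j)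

theorem sum_residual_eq_k_sub_card {N k : ℕ}
    (V : Matrix (Fin N) (Fin k) ℝ) (hV : Vᵀ * V = 1)
    (S : Finset (Fin N)) (hS : IsUnit (principalSub (V * Vᵀ) S).det) :
    ∑ i : Fin N, ((V * Vᵀ) i i - quadForm (V * Vᵀ) S i i) = (k : ℝ) - (S.card : ℝ) := by
  set P := V * Vᵀ with hPdef
  have hPP : P * P = P := by
    rw [hPdef, Matrix.mul_assoc, ← Matrix.mul_assoc Vᵀ, hV, Matrix.one_mul]
  have hsum1 : ∑ i : Fin N, P i i = (k : ℝ) := by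
    have : ∑ i : Fin N, P i i = Matrix.trace P := rfl
    rw [this, hPdef, Matrix.trace_mul_comm, hV, Matrix.trace_one]
    simp
  have hsumP : ∀ s t : {i // i ∈ S}, ∑ i : Fin N, P s.1 i * P t.1 i
      = principalSub P S s t := by
    intro s t
    have : (P * P) s.1 t.1 = P s.1 t.1 := by rw [hPP]
    rw [Matrix.mul_apply] at this
    have hsym : ∀ a b : Fin N, P a b = P b a := by
      intro a b
      have : Pᵀ = P := by rw [hPdef, Matrix.transpose_mul, Matrix.transpose_transpose]
      calc P a b = Pᵀ b a := rfl
        _ = P b a := by rw [this]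
    calc ∑ i : Fin N, P s.1 i * P t.1 i = ∑ i : Fin N, P s.1 i * P i t.1 := by
          simp_rw [hsym _ t.1]
      _ = P s.1 t.1 := this
      _ = principalSub P S s t := rfl
  have hsum2 : ∑ i : Fin N, quadForm P S i i = (S.card : ℝ) := by
    have expand : ∑ i : Fin N, quadForm P S i i
        = ∑ s : {i // i ∈ S}, ∑ t : {i // i ∈ S},
            (principalSub P S)⁻¹ s t * ∑ i : Fin N, P s.1 i * P t.1 i := by
      unfold quadForm colSub dotProduct Matrix.mulVec dotProduct
      rw [Finset.sum_comm]
      refine Finset.sum_congr rfl fun s _ => ?_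
      simp only [Finset.mul_sum]
      rw [Finset.sum_comm]
      refine Finset.sum_congr rfl fun t _ => ?_
      refine Finset.sum_congr rfl fun i _ => ?_
      ring
    rw [expand]
    simp_rw [hsumP]
    have : ∑ s : {i // i ∈ S}, ∑ t : {i // i ∈ S},
        (principalSub P S)⁻¹ s t * principalSub P S s t
        = Matrix.trace ((principalSub P S)⁻¹ * (principalSub P S)ᵀ) := by
      rw [Matrix.trace]
      refine Finset.sum_congr rfl fun s _ => ?_
      rw [Matrix.diag, Matrix.mul_apply]
      rfl
    rw [this]
    have hsymS : (principalSub P S)ᵀ = principalSub P S := by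
      ext a b
      have : Pᵀ = P := by rw [hPdef, Matrix.transpose_mul, Matrix.transpose_transpose]
      calc (principalSub P S)ᵀ a b = P b.1 a.1 := rfl
        _ = Pᵀ a.1 b.1 := rfl
        _ = P a.1 b.1 := by rw [this]
        _ = principalSub P S a b := rfl
    rw [hsymS, Matrix.nonsing_inv_mul _ hS, Matrix.trace_one]
    simp
  rw [Finset.sum_sub_distrib, hsum1, hsum2]
end

section
/- Let V ∈ ℝ^{N×k} with VᵀV = I_k and write y_i = Vᵀδ_i. Let s_1,...,s_n be distinct indices, and define recursively f_m = (y_{s_m} − ∑_{l<m} f_l (f_lᵀ y_{s_m})) / √(y_{s_m}ᵀ y_{s_m} − ∑_{l<m} (f_lᵀ y_{s_m})²), assuming all square-root arguments are positive. Then for all i, j: ∑_{l=1}^n (f_lᵀ y_i)(f_lᵀ y_j) = P_{S_n,i}ᵀ P_{S_n}^{−1} P_{S_n,j}, where P = VVᵀ and S_n = {s_1,...,s_n}. -/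
open Matrix BigOperators

/-- The set `S_m = {s_1, …, s_m}` of the first `m` selected indices. -/
def prefixSet {N n : ℕ} (s : Fin n → Fin N) (m : ℕ) : Finset (Fin N) :=
  (Finset.univ.filter fun l : Fin n => (l : ℕ) < m).image s

/-!
The recursion is Gram–Schmidt applied to `y_{s_1}, …, y_{s_n}`, so the `f_l` are orthonormal and
`y_{s_m} = ∑_t R_{tm} f_t` with `R_{tm} = f_tᵀ y_{s_m}` upper triangular with diagonal
`R_{mm} = √(residual) > 0`. Hence `P_{S_n} = RᵀR` and `P_{S_n,i} = Rᵀ g_i` with `g_i = (f_tᵀ y_i)_t`,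
and the quadratic form is `g_iᵀ R (RᵀR)⁻¹ Rᵀ g_j = g_iᵀ g_j`.
-/

open Finset Function

namespace Matrix

variable {K : Type*} [CommRing K]

theorem transpose_mulVec_dotProduct_inv_mulVec {m : Type*} [Fintype m] [DecidableEq m]
    (R : Matrix m m K) (hR : IsUnit R.det) (a b : m → K) :
    (Rᵀ *ᵥ a) ⬝ᵥ ((Rᵀ * R)⁻¹ *ᵥ (Rᵀ *ᵥ b)) = a ⬝ᵥ b := by
  rw [mul_inv_rev, mulVec_mulVec, mul_assoc,
    nonsing_inv_mul _ (by rwa [det_transpose]), mul_one, mulVec_transpose,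
    ← dotProduct_mulVec, mulVec_mulVec, mul_nonsing_inv _ hR, one_mulVec]

theorem dotProduct_inv_mulVec_comp_equiv {m n : Type*} [Fintype m] [DecidableEq m]
    [Fintype n] [DecidableEq n] (A : Matrix n n K) (e : m ≃ n) (u v : n → K) :
    u ⬝ᵥ (A⁻¹ *ᵥ v) = (u ∘ e) ⬝ᵥ ((A.submatrix e e)⁻¹ *ᵥ (v ∘ e)) := by
  rw [inv_submatrix_equiv, submatrix_mulVec_equiv, comp_assoc, e.self_comp_symm, comp_id,
    comp_equiv_dotProduct_comp_equiv]

end Matrix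

section GramSchmidt

variable {ι : Type*} [Fintype ι] {n : ℕ}

def gsResidual (x f : Fin n → ι → ℝ) (m : Fin n) : ℝ :=
  x m ⬝ᵥ x m - ∑ l ∈ univ.filter (· < m), (f l ⬝ᵥ x m) ^ 2

structure IsGramSchmidt (x f : Fin n → ι → ℝ) : Prop where
  residual_pos : ∀ m, 0 < gsResidual x f m
  eq : ∀ m, f m = (√(gsResidual x f m))⁻¹ •
    (x m - ∑ l ∈ univ.filter (· < m), (f l ⬝ᵥ x m) • f l)

namespace IsGramSchmidt

variable {x f : Fin n → ι → ℝ}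

theorem sqrt_residual_ne_zero (h : IsGramSchmidt x f) (m : Fin n) :
    √(gsResidual x f m) ≠ 0 :=
  (Real.sqrt_pos.2 (h.residual_pos m)).ne'

theorem dotProduct_eq (h : IsGramSchmidt x f) (m : Fin n) (w : ι → ℝ) :
    f m ⬝ᵥ w = (√(gsResidual x f m))⁻¹ *
      (x m ⬝ᵥ w - ∑ l ∈ univ.filter (· < m), (f l ⬝ᵥ x m) * (f l ⬝ᵥ w)) := by
  rw [h.eq m, smul_dotProduct, sub_dotProduct, sum_dotProduct]
  simp only [smul_dotProduct, smul_eq_mul]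

theorem eq_smul_add_sum (h : IsGramSchmidt x f) (m : Fin n) :
    x m = √(gsResidual x f m) • f m + ∑ l ∈ univ.filter (· < m), (f l ⬝ᵥ x m) • f l := by
  rw [h.eq m, smul_smul, mul_inv_cancel₀ (h.sqrt_residual_ne_zero m), one_smul, sub_add_cancel]

theorem dotProduct_self_eq_sqrt (h : IsGramSchmidt x f) (m : Fin n) :
    f m ⬝ᵥ x m = √(gsResidual x f m) := by
  rw [h.dotProduct_eq m]
  simp only [← pow_two]
  rw [← gsResidual, inv_mul_eq_div, Real.div_sqrt]

theorem orthonormal (h : IsGramSchmidt x f) (l m : Fin n) :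
    f l ⬝ᵥ f m = if l = m then 1 else 0 := by
  have swap : ∀ a b, f a ⬝ᵥ f b = (if a = b then 1 else 0) →
      f b ⬝ᵥ f a = if b = a then 1 else 0 := fun a b hab => by
    rw [dotProduct_comm, hab]
    simp only [@eq_comm _ a b]
  suffices key : ∀ m, ∀ l ≤ m, f l ⬝ᵥ f m = if l = m then 1 else 0 by
    rcases le_total l m with hlm | hml
    · exact key m l hlm
    · exact swap m l (key l m hml)
  intro m
  induction m using WellFoundedLT.induction with
  | _ m ih =>
  have below : ∀ a b, a < m → b < m → f a ⬝ᵥ f b = if a = b then 1 else 0 := by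
    intro a b ha hb
    rcases le_total a b with hab | hba
    · exact ih b hb a hab
    · exact swap b a (ih a ha b hba)
  have perp : ∀ l < m, f m ⬝ᵥ f l = 0 := by
    intro l hl
    rw [h.dotProduct_eq, sum_eq_single_of_mem l (by simpa using hl) fun b hb hbl => by
      rw [below b l (mem_filter.1 hb).2 hl, if_neg hbl, mul_zero],
      below l l hl hl, if_pos rfl, mul_one, dotProduct_comm, sub_self, mul_zero]
  intro l hl
  rcases hl.lt_or_eq with hl | rfl
  · rw [dotProduct_comm, perp l hl, if_neg hl.ne]
  · rw [if_pos rfl, h.dotProduct_eq, sum_eq_zero fun b hb => by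
      rw [dotProduct_comm (f b) (f l), perp b (mem_filter.1 hb).2, mul_zero],
      sub_zero, dotProduct_comm, h.dotProduct_self_eq_sqrt,
      inv_mul_cancel₀ (h.sqrt_residual_ne_zero l)]

theorem dotProduct_eq_zero_of_lt (h : IsGramSchmidt x f) {m t : Fin n} (hmt : m < t) :
    f t ⬝ᵥ x m = 0 := by
  rw [h.eq_smul_add_sum m, dotProduct_add, dotProduct_smul, dotProduct_sum, h.orthonormal,
    if_neg hmt.ne', smul_zero, zero_add]
  refine sum_eq_zero fun l hl => ?_
  rw [dotProduct_smul, h.orthonormal, if_neg ((mem_filter.1 hl).2.trans hmt).ne', smul_zero]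

theorem eq_sum (h : IsGramSchmidt x f) (m : Fin n) : x m = ∑ t, (f t ⬝ᵥ x m) • f t := by
  rw [← sum_subset (subset_univ (Iic m)) fun t _ ht => by
      rw [h.dotProduct_eq_zero_of_lt (not_le.1 (by simpa using ht)), zero_smul],
    ← Iio_insert, sum_insert notMem_Iio_self, h.dotProduct_self_eq_sqrt,
    ← filter_gt_eq_Iio]
  exact h.eq_smul_add_sum m

theorem dotProduct_eq_sum (h : IsGramSchmidt x f) (m : Fin n) (w : ι → ℝ) :
    x m ⬝ᵥ w = ∑ t, (f t ⬝ᵥ x m) * (f t ⬝ᵥ w) := by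
  conv_lhs => rw [h.eq_sum m]
  simp only [sum_dotProduct, smul_dotProduct, smul_eq_mul]

theorem isUnit_det (h : IsGramSchmidt x f) : IsUnit (Matrix.of fun t m => f t ⬝ᵥ x m).det := by
  have upper : (Matrix.of fun t m => f t ⬝ᵥ x m).IsUpperTriangular := fun _ _ hmt =>
    h.dotProduct_eq_zero_of_lt hmt
  rw [det_of_isUpperTriangular upper]
  refine isUnit_iff_ne_zero.2 (prod_ne_zero_iff.2 fun m _ => ?_)
  rw [of_apply, h.dotProduct_self_eq_sqrt]
  exact h.sqrt_residual_ne_zero m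

end IsGramSchmidt

end GramSchmidt

section PrefixSet

variable {N n : ℕ} {s : Fin n → Fin N}

theorem mem_prefixSet_self (l : Fin n) : s l ∈ prefixSet s n :=
  mem_image.2 ⟨l, by simp, rfl⟩

noncomputable def prefixSetEquiv (hs : Injective s) : Fin n ≃ prefixSet s n :=
  Equiv.ofBijective (fun l => ⟨s l, mem_prefixSet_self l⟩)
    ⟨fun _ _ hab => hs (congrArg Subtype.val hab), by
      rintro ⟨_, hx⟩
      obtain ⟨l, _, rfl⟩ := mem_image.1 hx
      exact ⟨l, rfl⟩⟩

theorem IsGramSchmidt.sum_mul_eq_quadForm {ι : Type*} [Fintype ι]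
    {P : Matrix (Fin N) (Fin N) ℝ} {y : Fin N → ι → ℝ} (hP : ∀ a b, P a b = y a ⬝ᵥ y b)
    (hs : Injective s) {f : Fin n → ι → ℝ} (h : IsGramSchmidt (y ∘ s) f) (i j : Fin N) :
    ∑ l, (f l ⬝ᵥ y i) * (f l ⬝ᵥ y j) = quadForm P (prefixSet s n) i j := by
  set e := prefixSetEquiv hs
  set R : Matrix (Fin n) (Fin n) ℝ := Matrix.of fun t m => f t ⬝ᵥ y (s m)
  have hgram : (principalSub P _).submatrix e e = Rᵀ * R := by
    ext t m
    exact (hP _ _).trans (h.dotProduct_eq_sum t _)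
  have hcol : ∀ a, colSub P _ a ∘ e = Rᵀ *ᵥ fun t => f t ⬝ᵥ y a := fun a => by
    funext t
    exact (hP _ _).trans (h.dotProduct_eq_sum t _)
  rw [quadForm, dotProduct_inv_mulVec_comp_equiv _ e, hgram, hcol, hcol,
    transpose_mulVec_dotProduct_inv_mulVec R h.isUnit_det]
  rfl

end PrefixSet

theorem gram_schmidt_sampler_correct_general {N k n : ℕ}
    (V : Matrix (Fin N) (Fin k) ℝ)
    (y : Fin N → Fin k → ℝ) (hy : ∀ i, y i = Vᵀ *ᵥ Pi.single i 1)
    (s : Fin n → Fin N) (hs : Function.Injective s)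
    (f : Fin n → Fin k → ℝ)
    (hpos : ∀ m : Fin n,
      0 < y (s m) ⬝ᵥ y (s m) -
        ∑ l ∈ Finset.univ.filter (· < m), (f l ⬝ᵥ y (s m)) ^ 2)
    (hf : ∀ m : Fin n,
      f m = (Real.sqrt (y (s m) ⬝ᵥ y (s m) -
          ∑ l ∈ Finset.univ.filter (· < m), (f l ⬝ᵥ y (s m)) ^ 2))⁻¹ •
        (y (s m) - ∑ l ∈ Finset.univ.filter (· < m), (f l ⬝ᵥ y (s m)) • f l)) :
    ∀ i j : Fin N,
      ∑ l : Fin n, (f l ⬝ᵥ y i) * (f l ⬝ᵥ y j) = quadForm (V * Vᵀ) (prefixSet s n) i j := by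
  have hP : ∀ a b, (V * Vᵀ) a b = y a ⬝ᵥ y b := fun a b => by
    simp [hy, mulVec_single, dotProduct, mul_apply]
  exact IsGramSchmidt.sum_mul_eq_quadForm hP hs ⟨hpos, hf⟩

theorem gram_schmidt_sampler_correct {N k n : ℕ}
    (V : Matrix (Fin N) (Fin k) ℝ) (hV : Vᵀ * V = 1)
    (y : Fin N → Fin k → ℝ) (hy : ∀ i, y i = Vᵀ *ᵥ Pi.single i 1)
    (s : Fin n → Fin N) (hs : Function.Injective s)
    (f : Fin n → Fin k → ℝ)
    (hpos : ∀ m : Fin n,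
      0 < y (s m) ⬝ᵥ y (s m) -
        ∑ l ∈ Finset.univ.filter (· < m), (f l ⬝ᵥ y (s m)) ^ 2)
    (hf : ∀ m : Fin n,
      f m = (Real.sqrt (y (s m) ⬝ᵥ y (s m) -
          ∑ l ∈ Finset.univ.filter (· < m), (f l ⬝ᵥ y (s m)) ^ 2))⁻¹ •
        (y (s m) - ∑ l ∈ Finset.univ.filter (· < m), (f l ⬝ᵥ y (s m)) • f l))
    (hinv : ∀ m : ℕ, m ≤ n → IsUnit (principalSub (V * Vᵀ) (prefixSet s m)).det) :
    ∀ i j : Fin N,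
      ∑ l : Fin n, (f l ⬝ᵥ y i) * (f l ⬝ᵥ y j) = quadForm (V * Vᵀ) (prefixSet s n) i j :=
  gram_schmidt_sampler_correct_general V y hy s hs f hpos hf
end
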